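/- Fix a dimension n ≥ 1. For each set S ⊆ ℕ define the open set Y_S ⊆ (−1,1)ⁿ by Y_S := (−1,0)ⁿ ∪ ⋃_{m=1}^∞ ( (2^{−2m}, 2^{−2m+1}) \ ⋃_{s∈S} { 2^{−2s} + (k/(s+1))·2^{−2s} : k = 1, …, s } )ⁿ. Then whenever S, S' ⊆ ℕ and S ≠ S', there is no bijection f from Y_S onto Y_{S'} such that both f and f⁻¹ are uniformly continuous. -/

import Mathlib

/-!
The connected components of `Y_S` are the cube `(-1,0)ⁿ`, the cubes `(2^{-2m}, 2^{-2m+1})ⁿ` for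
`m ∉ S`, and, for `s ∈ S`, the `(s+1)ⁿ` open cells into which the removed grid points cut the
`s`-th cube. Two distinct components are at distance zero only if they are cells of the same
block `s ∈ S`, and adjacent cells of a block are at distance zero. A bijection that is uniformly
continuous in both directions is a homeomorphism that preserves "being at distance zero", so it
maps the cells of a block `s ∈ S` injectively into the cells of a single block `m ∈ S'`, and its
inverse maps that block back into block `s`. Counting cells gives `(s+1)ⁿ = (m+1)ⁿ`, so
`s = m ∈ S'`.
-/

/-- The open set `Y_S ⊆ (−1,1)ⁿ` of Proposition 3:
`Y_S = (−1,0)ⁿ ∪ ⋃_{m≥1} ((2^{−2m}, 2^{−2m+1}) \ ⋃_{s∈S} {2^{−2s} + (k/(s+1))·2^{−2s} : 1 ≤ k ≤ s})ⁿ`. -/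
noncomputable def YSet (n : ℕ) (S : Set ℕ) : Set (EuclideanSpace ℝ (Fin n)) :=
  {x | ∀ i, x i ∈ Set.Ioo (-1 : ℝ) 0} ∪
    ⋃ m ∈ Set.Ici (1 : ℕ), {x | ∀ i, x i ∈
      Set.Ioo ((2 : ℝ) ^ (-(2 * (m : ℤ)))) ((2 : ℝ) ^ (1 - 2 * (m : ℤ))) \
        ⋃ s ∈ S, (fun k : ℕ => (2 : ℝ) ^ (-(2 * (s : ℤ))) +
          ((k : ℝ) / ((s : ℝ) + 1)) * (2 : ℝ) ^ (-(2 * (s : ℤ)))) '' Set.Icc 1 s}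

open Set Metric

namespace Metric.AreSeparated

variable {X Y : Type*} [PseudoEMetricSpace X] [PseudoEMetricSpace Y] {s t : Set X}

theorem disjoint_closure (h : AreSeparated s t) : Disjoint (closure s) (closure t) := by
  obtain ⟨r, r0, hr⟩ := h
  have hsep : closure s ×ˢ closure t ⊆ {p : X × X | r ≤ edist p.1 p.2} := by
    rw [← closure_prod_eq]
    exact closure_minimal (fun p hp => hr _ hp.1 _ hp.2)
      (isClosed_le continuous_const continuous_edist)
  refine Set.disjoint_left.2 fun x hs ht => r0 ?_
  simpa using hsep (mk_mem_prod hs ht)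

theorem of_image {f : X → Y} (hf : UniformContinuous f) (h : AreSeparated (f '' s) (f '' t)) :
    AreSeparated s t := by
  obtain ⟨r, r0, hr⟩ := h
  obtain ⟨δ, δ0, hδ⟩ := EMetric.uniformContinuous_iff.1 hf r (pos_iff_ne_zero.2 r0)
  refine ⟨δ, δ0.ne', fun x hx y hy => not_lt.1 fun hxy => ?_⟩
  exact (hδ hxy).not_ge (hr _ (mem_image_of_mem f hx) _ (mem_image_of_mem f hy))

theorem image_of_isometry {f : X → Y} (hf : Isometry f) (h : AreSeparated s t) :
    AreSeparated (f '' s) (f '' t) := by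
  obtain ⟨r, r0, hr⟩ := h
  refine ⟨r, r0, ?_⟩
  rintro _ ⟨x, hx, rfl⟩ _ ⟨y, hy, rfl⟩
  rw [hf.edist_eq]
  exact hr x hx y hy

end Metric.AreSeparated

theorem Continuous.connectedComponent_eq {α β : Type*} [TopologicalSpace α] [TopologicalSpace β]
    {f : α → β} (hf : Continuous f) {x y : α} (h : connectedComponent x = connectedComponent y) :
    connectedComponent (f x) = connectedComponent (f y) := by
  rw [connectedComponent_eq_iff_mem] at h ⊢
  exact hf.image_connectedComponent_subset y ⟨x, h, rfl⟩

section Subspace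

variable {α : Type*} [TopologicalSpace α] {Y U : Set α}

theorem isClopen_preimage_val_of_inter_closure_subset (hU : IsOpen U) (hYU : Y ∩ closure U ⊆ U) :
    IsClopen ((↑) ⁻¹' U : Set Y) := by
  have hcl : ((↑) ⁻¹' U : Set Y) = (↑) ⁻¹' closure U :=
    (preimage_mono subset_closure).antisymm fun x hx => hYU ⟨x.2, hx⟩
  exact ⟨hcl ▸ isClosed_closure.preimage continuous_subtype_val,
    hU.preimage continuous_subtype_val⟩

theorem connectedComponent_subset_preimage_val (hU : IsOpen U) (hYU : Y ∩ closure U ⊆ U)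
    {x : Y} (hx : (x : α) ∈ U) : connectedComponent x ⊆ (↑) ⁻¹' U :=
  (isClopen_preimage_val_of_inter_closure_subset hU hYU).connectedComponent_subset hx

theorem connectedComponent_eq_preimage_val (hU : IsOpen U) (hUc : IsPreconnected U) (hUY : U ⊆ Y)
    (hYU : Y ∩ closure U ⊆ U) {x : Y} (hx : (x : α) ∈ U) :
    connectedComponent x = (↑) ⁻¹' U := by
  refine (connectedComponent_subset_preimage_val hU hYU hx).antisymm
    (IsPreconnected.subset_connectedComponent ?_ hx)
  rwa [← Topology.IsInducing.subtypeVal.isPreconnected_image, Subtype.image_preimage_coe,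
    inter_eq_right.2 hUY]

end Subspace

theorem areSeparated_connectedComponent {α : Type*} [PseudoEMetricSpace α] {Y U V : Set α}
    (hU : IsOpen U) (hV : IsOpen V) (hYU : Y ∩ closure U ⊆ U) (hYV : Y ∩ closure V ⊆ V)
    (hUV : AreSeparated U V) {x y : Y} (hx : (x : α) ∈ U) (hy : (y : α) ∈ V) :
    AreSeparated (connectedComponent x) (connectedComponent y) :=
  ((hUV.mono (image_preimage_subset _ _) (image_preimage_subset _ _)).of_image
    uniformContinuous_subtype_val).mono
    (connectedComponent_subset_preimage_val hU hYU hx)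
    (connectedComponent_subset_preimage_val hV hYV hy)

theorem exists_lt_mem_Ioo_succ {β : Type*} [LinearOrder β] {u : ℕ → β} {t : β} {N : ℕ}
    (h0 : u 0 < t) (hN : t < u N) (hne : ∀ k, t ≠ u k) : ∃ k < N, t ∈ Ioo (u k) (u (k + 1)) := by
  induction N with
  | zero => exact absurd (h0.trans hN) (lt_irrefl _)
  | succ N ih =>
    rcases (hne N).lt_or_gt with h | h
    · obtain ⟨k, hk, hkt⟩ := ih h
      exact ⟨k, by omega, hkt⟩
    · exact ⟨N, N.lt_succ_self, h, hN⟩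

theorem grid_induction {ι : Type*} {N : ℕ} {P : (ι → Fin (N + 1)) → Prop} (h0 : P 0)
    (hstep : ∀ g g' : ι → Fin (N + 1), (∀ i, (g' i : ℕ) = g i ∨ (g' i : ℕ) = g i + 1) →
      P g → P g')
    (g : ι → Fin (N + 1)) : P g := by
  let p (t : ℕ) : ι → Fin (N + 1) := fun i => ⟨min (g i) t, by omega⟩
  have hp : ∀ t, P (p t) := by
    intro t
    induction t with
    | zero => convert h0 using 1; ext i; simp [p]
    | succ t ih => exact hstep _ _ (fun i => by simp only [p]; omega) ih
  convert hp N using 1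
  ext i
  simp only [p]
  omega

namespace EuclideanSpace

variable {ι : Type*}

def box (lo hi : ι → ℝ) : Set (EuclideanSpace ℝ ι) := {x | ∀ i, x i ∈ Ioo (lo i) (hi i)}

variable {lo hi lo' hi' : ι → ℝ}

theorem box_eq_preimage_pi (lo hi : ι → ℝ) :
    box lo hi = EuclideanSpace.equiv ι ℝ ⁻¹' univ.pi fun i => Ioo (lo i) (hi i) := by
  ext x; simp [box]

theorem isOpen_box [Fintype ι] (lo hi : ι → ℝ) : IsOpen (box lo hi) := by
  rw [box_eq_preimage_pi]
  exact (isOpen_set_pi finite_univ fun i _ => isOpen_Ioo).preimage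
    (EuclideanSpace.equiv ι ℝ).continuous

theorem isPreconnected_box [Fintype ι] (lo hi : ι → ℝ) : IsPreconnected (box lo hi) := by
  refine Convex.isPreconnected fun x hx y hy a b ha hb hab i => ?_
  simpa using convex_Ioo (lo i) (hi i) (hx i) (hy i) ha hb hab

theorem closure_box (h : ∀ i, lo i < hi i) :
    closure (box lo hi) = {x | ∀ i, x i ∈ Icc (lo i) (hi i)} := by
  rw [box_eq_preimage_pi, ← ContinuousLinearEquiv.preimage_closure, closure_pi_set]
  ext x
  simp only [mem_preimage, mem_univ_pi, closure_Ioo (h _).ne]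
  rfl

theorem box_nonempty (h : ∀ i, lo i < hi i) : (box lo hi).Nonempty :=
  ⟨WithLp.toLp 2 fun i => (lo i + hi i) / 2, fun i => by
    constructor <;> simp <;> linarith [h i]⟩

theorem areSeparated_box [Fintype ι] (i : ι) (h : hi i < lo' i) :
    AreSeparated (box lo hi) (box lo' hi') := by
  refine ⟨ENNReal.ofReal (lo' i - hi i), by simpa using h, fun x hx y hy => ?_⟩
  calc ENNReal.ofReal (lo' i - hi i) ≤ ENNReal.ofReal (dist (x i) (y i)) := by
        gcongr
        rw [Real.dist_eq, abs_sub_comm]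
        linarith [le_abs_self (y i - x i), (hx i).2, (hy i).1]
    _ = edist (x i) (y i) := (edist_dist _ _).symm
    _ ≤ edist x y := PiLp.edist_apply_le x y i

end EuclideanSpace

namespace YSet

open EuclideanSpace

variable {n : ℕ} {T : Set ℕ} {m m' s : ℕ}

noncomputable def bandLo (m : ℕ) : ℝ := 2 ^ (-(2 * (m : ℤ)))

/- For `1 ≤ k ≤ s`, `gridPt s k` are the points removed from the `s`-th band of `YSet`, while
`gridPt s 0` and `gridPt s (s + 1)` are the ends of that band. -/
noncomputable def gridPt (s k : ℕ) : ℝ := bandLo s + ((k : ℝ) / ((s : ℝ) + 1)) * bandLo s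

def band (m : ℕ) : Set (EuclideanSpace ℝ (Fin n)) :=
  box (fun _ => bandLo m) (fun _ => 2 * bandLo m)

def negCube : Set (EuclideanSpace ℝ (Fin n)) := box (fun _ => -1) (fun _ => 0)

def cell (s : ℕ) (g : Fin n → Fin (s + 1)) : Set (EuclideanSpace ℝ (Fin n)) :=
  box (fun i => gridPt s (g i)) (fun i => gridPt s ((g i : ℕ) + 1))

theorem bandLo_pos (m : ℕ) : 0 < bandLo m := zpow_pos two_pos _

theorem two_zpow_one_sub (m : ℕ) : (2 : ℝ) ^ (1 - 2 * (m : ℤ)) = 2 * bandLo m := by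
  rw [bandLo, sub_eq_add_neg, zpow_add₀ two_ne_zero, zpow_one]

theorem two_mul_bandLo_lt (h : m < m') : 2 * bandLo m' < bandLo m := by
  rw [← two_zpow_one_sub]
  exact zpow_lt_zpow_right₀ one_lt_two (by omega)

theorem eq_of_mem_Icc_band {t : ℝ} (h : t ∈ Icc (bandLo m) (2 * bandLo m))
    (h' : t ∈ Icc (bandLo m') (2 * bandLo m')) : m = m' := by
  by_contra hne
  rcases lt_or_gt_of_ne hne with hlt | hlt
  · linarith [two_mul_bandLo_lt hlt, h.1, h'.2]
  · linarith [two_mul_bandLo_lt hlt, h.2, h'.1]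

theorem gridPt_strictMono (s : ℕ) : StrictMono (gridPt s) := fun k k' h => by
  have := bandLo_pos s
  unfold gridPt
  gcongr

theorem gridPt_zero (s : ℕ) : gridPt s 0 = bandLo s := by simp [gridPt]

theorem gridPt_succ_self (s : ℕ) : gridPt s (s + 1) = 2 * bandLo s := by
  have : (s : ℝ) + 1 ≠ 0 := by positivity
  simp [gridPt, this]
  ring

theorem gridPt_mem_Icc {k : ℕ} (hk : k ≤ s + 1) : gridPt s k ∈ Icc (bandLo s) (2 * bandLo s) := by
  rw [← gridPt_succ_self, ← gridPt_zero]
  exact ⟨(gridPt_strictMono s).monotone (Nat.zero_le k), (gridPt_strictMono s).monotone hk⟩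

theorem mem_YSet {x : EuclideanSpace ℝ (Fin n)} :
    x ∈ YSet n T ↔ x ∈ negCube ∨
      ∃ m, 1 ≤ m ∧ x ∈ band m ∧ ∀ i, ∀ s ∈ T, x i ∉ gridPt s '' Icc 1 s := by
  simp only [YSet, two_zpow_one_sub, mem_union, mem_iUnion, mem_Ici, mem_sdiff, exists_prop,
    not_exists, not_and, forall_and]
  rfl

theorem coord_mem_Ioo_of_mem_Icc_negCube {x : EuclideanSpace ℝ (Fin n)} (hx : x ∈ YSet n T)
    (i : Fin n) (h : x i ∈ Icc (-1 : ℝ) 0) : x i ∈ Ioo (-1 : ℝ) 0 := by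
  rcases mem_YSet.1 hx with hN | ⟨m, -, hm, -⟩
  · exact hN i
  · exact absurd h.2 (not_le.2 ((bandLo_pos m).trans (hm i).1))

theorem coord_mem_Ioo_of_mem_Icc_band {x : EuclideanSpace ℝ (Fin n)} (hx : x ∈ YSet n T)
    (i : Fin n) (h : x i ∈ Icc (bandLo m) (2 * bandLo m)) :
    x i ∈ Ioo (bandLo m) (2 * bandLo m) ∧ (m ∈ T → ∀ k, x i ≠ gridPt m k) := by
  rcases mem_YSet.1 hx with hN | ⟨m', -, hm', hgrid⟩
  · exact absurd (hN i).2 (not_lt.2 ((bandLo_pos m).le.trans h.1))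
  obtain rfl : m' = m := eq_of_mem_Icc_band (Ioo_subset_Icc_self (hm' i)) h
  refine ⟨hm' i, fun hmT k hk => ?_⟩
  rcases Nat.eq_zero_or_pos k with rfl | hk0
  · exact (hm' i).1.ne' (hk.trans (gridPt_zero m'))
  rcases le_or_gt k m' with hkm | hkm
  · exact hgrid i m' hmT ⟨k, ⟨hk0, hkm⟩, hk.symm⟩
  · have := (gridPt_strictMono m').monotone (Nat.succ_le_of_lt hkm)
    rw [gridPt_succ_self] at this
    exact (hm' i).2.not_ge (hk ▸ this)

theorem inter_closure_negCube_subset : YSet n T ∩ closure negCube ⊆ negCube := by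
  rintro x ⟨hx, hcl⟩ i
  rw [negCube, closure_box fun _ => neg_one_lt_zero] at hcl
  exact coord_mem_Ioo_of_mem_Icc_negCube hx i (hcl i)

theorem inter_closure_band_subset : YSet n T ∩ closure (band m) ⊆ band m := by
  rintro x ⟨hx, hcl⟩ i
  rw [band, closure_box fun _ => by linarith [bandLo_pos m]] at hcl
  exact (coord_mem_Ioo_of_mem_Icc_band hx i (hcl i)).1

theorem inter_closure_cell_subset (hs : s ∈ T) (g : Fin n → Fin (s + 1)) :
    YSet n T ∩ closure (cell s g) ⊆ cell s g := by
  rintro x ⟨hx, hcl⟩ i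
  rw [cell, closure_box fun i => gridPt_strictMono s (Nat.lt_succ_self _)] at hcl
  have hband : x i ∈ Icc (bandLo s) (2 * bandLo s) :=
    ⟨(gridPt_mem_Icc (by omega)).1.trans (hcl i).1,
      (hcl i).2.trans (gridPt_mem_Icc (by omega)).2⟩
  have hne := (coord_mem_Ioo_of_mem_Icc_band hx i hband).2 hs
  exact ⟨(hcl i).1.lt_of_ne (hne _).symm, (hcl i).2.lt_of_ne (hne _)⟩

theorem negCube_subset_YSet : negCube ⊆ YSet n T := fun _ hx => mem_YSet.2 (Or.inl hx)

theorem band_subset_YSet (hm : 1 ≤ m) (hmT : m ∉ T) : band m ⊆ YSet n T := by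
  refine fun x hx => mem_YSet.2 (Or.inr ⟨m, hm, hx, fun i s hs => ?_⟩)
  rintro ⟨k, hk, hxk⟩
  have hband := Ioo_subset_Icc_self (hx i)
  rw [← hxk] at hband
  exact hmT (eq_of_mem_Icc_band (gridPt_mem_Icc (Nat.le_succ_of_le hk.2)) hband ▸ hs)

theorem cell_subset_band (g : Fin n → Fin (s + 1)) : cell s g ⊆ band s := by
  intro x hx i
  rw [← gridPt_succ_self, ← gridPt_zero]
  exact ⟨((gridPt_strictMono s).monotone (Nat.zero_le _)).trans_lt (hx i).1,
    (hx i).2.trans_le ((gridPt_strictMono s).monotone (by omega))⟩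

theorem cell_subset_YSet (hs : 1 ≤ s) (g : Fin n → Fin (s + 1)) : cell s g ⊆ YSet n T := by
  refine fun x hx => mem_YSet.2 (Or.inr ⟨s, hs, cell_subset_band g hx, fun i s' _ => ?_⟩)
  rintro ⟨k, hk, hxk⟩
  have hband := Ioo_subset_Icc_self (cell_subset_band g hx i)
  rw [← hxk] at hband
  obtain rfl : s' = s := eq_of_mem_Icc_band (gridPt_mem_Icc (Nat.le_succ_of_le hk.2)) hband
  have h1 := (gridPt_strictMono s').lt_iff_lt.1 (hxk ▸ (hx i).1)
  have h2 := (gridPt_strictMono s').lt_iff_lt.1 (hxk ▸ (hx i).2)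
  omega

theorem cell_nonempty (g : Fin n → Fin (s + 1)) : (cell s g).Nonempty :=
  box_nonempty fun _ => gridPt_strictMono s (Nat.lt_succ_self _)

theorem exists_mem_cell {x : EuclideanSpace ℝ (Fin n)} (hx : x ∈ YSet n T) (hxm : x ∈ band m)
    (hm : m ∈ T) : ∃ g, x ∈ cell m g := by
  have hcoord (i : Fin n) : ∃ k < m + 1, x i ∈ Ioo (gridPt m k) (gridPt m (k + 1)) :=
    exists_lt_mem_Ioo_succ (by rw [gridPt_zero]; exact (hxm i).1)
      (by rw [gridPt_succ_self]; exact (hxm i).2)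
      ((coord_mem_Ioo_of_mem_Icc_band hx i (Ioo_subset_Icc_self (hxm i))).2 hm)
  choose k hk hxk using hcoord
  exact ⟨fun i => ⟨k i, hk i⟩, hxk⟩

theorem eq_of_mem_cell {x : EuclideanSpace ℝ (Fin n)} {g g' : Fin n → Fin (s + 1)}
    (hx : x ∈ cell s g) (hx' : x ∈ cell s g') : g = g' := by
  funext i
  have h1 := (gridPt_strictMono s).lt_iff_lt.1 ((hx i).1.trans (hx' i).2)
  have h2 := (gridPt_strictMono s).lt_iff_lt.1 ((hx' i).1.trans (hx i).2)
  exact Fin.ext (by omega)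

theorem not_areSeparated_cell {g g' : Fin n → Fin (s + 1)}
    (h : ∀ i, (g' i : ℕ) = g i ∨ (g' i : ℕ) = g i + 1) :
    ¬AreSeparated (cell s g) (cell s g') := by
  intro hsep
  have hlt : ∀ g : Fin n → Fin (s + 1), ∀ i, gridPt s (g i) < gridPt s ((g i : ℕ) + 1) :=
    fun _ _ => gridPt_strictMono s (Nat.lt_succ_self _)
  -- the upper corner of `cell s g` lies in the closure of both cells
  let p : EuclideanSpace ℝ (Fin n) := WithLp.toLp 2 fun i => gridPt s ((g i : ℕ) + 1)
  have hpg : p ∈ closure (cell s g) := by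
    rw [cell, closure_box (hlt g)]
    exact fun i => ⟨(hlt g i).le, le_rfl⟩
  refine Set.disjoint_left.1 hsep.disjoint_closure hpg ?_
  rw [cell, closure_box (hlt g')]
  intro i
  rcases h i with h | h <;> simp only [p, h, mem_Icc]
  · exact ⟨(hlt g i).le, le_rfl⟩
  · exact ⟨le_rfl, (gridPt_strictMono s).monotone (by omega)⟩

theorem eq_of_mem_band (hn : 0 < n) {x : EuclideanSpace ℝ (Fin n)} (hx : x ∈ band m)
    (hx' : x ∈ band m') : m = m' :=
  eq_of_mem_Icc_band (Ioo_subset_Icc_self (hx ⟨0, hn⟩)) (Ioo_subset_Icc_self (hx' ⟨0, hn⟩))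

theorem areSeparated_negCube_band (hn : 0 < n) (m : ℕ) :
    AreSeparated (negCube : Set (EuclideanSpace ℝ (Fin n))) (band m) :=
  areSeparated_box ⟨0, hn⟩ (bandLo_pos m)

theorem areSeparated_band (hn : 0 < n) (h : m < m') :
    AreSeparated (band m' : Set (EuclideanSpace ℝ (Fin n))) (band m) :=
  areSeparated_box ⟨0, hn⟩ (two_mul_bandLo_lt h)

theorem connectedComponent_eq_cell (hs : s ∈ T) (hs1 : 1 ≤ s) {g : Fin n → Fin (s + 1)}
    {x : YSet n T} (hx : x.1 ∈ cell s g) : connectedComponent x = (↑) ⁻¹' cell s g :=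
  connectedComponent_eq_preimage_val (isOpen_box _ _) (isPreconnected_box _ _)
    (cell_subset_YSet hs1 g) (inter_closure_cell_subset hs g) hx

theorem eq_of_connectedComponent_eq (hs : s ∈ T) (hs1 : 1 ≤ s) {g g' : Fin n → Fin (s + 1)}
    {x y : YSet n T} (h : connectedComponent x = connectedComponent y) (hx : x.1 ∈ cell s g)
    (hy : y.1 ∈ cell s g') : g = g' := by
  have hyx : y ∈ connectedComponent x := h ▸ mem_connectedComponent
  rw [connectedComponent_eq_cell hs hs1 hx] at hyx
  exact eq_of_mem_cell hyx hy

theorem mem_band_of_connectedComponent_eq {x y : YSet n T}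
    (h : connectedComponent x = connectedComponent y) (hx : x.1 ∈ band m) : y.1 ∈ band m :=
  connectedComponent_subset_preimage_val (isOpen_box _ _) inter_closure_band_subset hx
    (h ▸ mem_connectedComponent)

theorem exists_subtype_mem_cell (hs : 1 ≤ s) (g : Fin n → Fin (s + 1)) :
    ∃ x : YSet n T, x.1 ∈ cell s g :=
  let ⟨x, hx⟩ := cell_nonempty g
  ⟨⟨x, cell_subset_YSet hs g hx⟩, hx⟩

theorem exists_band_of_not_areSeparated (hn : 0 < n) {x y : YSet n T}
    (hne : connectedComponent x ≠ connectedComponent y)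
    (h : ¬AreSeparated (connectedComponent x) (connectedComponent y)) :
    ∃ m ∈ T, 1 ≤ m ∧ x.1 ∈ band m ∧ y.1 ∈ band m := by
  have hsame {U : Set (EuclideanSpace ℝ (Fin n))} (hU : IsOpen U) (hUc : IsPreconnected U)
      (hUY : U ⊆ YSet n T) (hYU : YSet n T ∩ closure U ⊆ U) (hx : x.1 ∈ U) (hy : y.1 ∈ U) : False :=
    hne ((connectedComponent_eq_preimage_val hU hUc hUY hYU hx).trans
      (connectedComponent_eq_preimage_val hU hUc hUY hYU hy).symm)
  have hsep {U V : Set (EuclideanSpace ℝ (Fin n))} (hU : IsOpen U) (hV : IsOpen V)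
      (hYU : YSet n T ∩ closure U ⊆ U) (hYV : YSet n T ∩ closure V ⊆ V) (hUV : AreSeparated U V)
      (hx : x.1 ∈ U) (hy : y.1 ∈ V) : False :=
    h (areSeparated_connectedComponent hU hV hYU hYV hUV hx hy)
  have hN : IsOpen (negCube : Set (EuclideanSpace ℝ (Fin n))) := isOpen_box _ _
  have hB (m : ℕ) : IsOpen (band m : Set (EuclideanSpace ℝ (Fin n))) := isOpen_box _ _
  rcases mem_YSet.1 x.2 with hx | ⟨m, hm, hx, -⟩ <;>
    rcases mem_YSet.1 y.2 with hy | ⟨m', hm', hy, -⟩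
  · exact (hsame hN (isPreconnected_box _ _) negCube_subset_YSet inter_closure_negCube_subset
      hx hy).elim
  · exact (hsep hN (hB m') inter_closure_negCube_subset inter_closure_band_subset
      (areSeparated_negCube_band hn m') hx hy).elim
  · exact (hsep (hB m) hN inter_closure_band_subset inter_closure_negCube_subset
      (areSeparated_negCube_band hn m).symm hx hy).elim
  obtain rfl : m = m' := by
    by_contra hmm
    rcases lt_or_gt_of_ne hmm with hlt | hlt
    · exact hsep (hB m) (hB m') inter_closure_band_subset inter_closure_band_subset
        (areSeparated_band hn hlt).symm hx hy
    · exact hsep (hB m) (hB m') inter_closure_band_subset inter_closure_band_subset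
        (areSeparated_band hn hlt) hx hy
  by_cases hmT : m ∈ T
  · exact ⟨m, hmT, hm, hx, hy⟩
  · exact (hsame (hB m) (isPreconnected_box _ _) (band_subset_YSet hm hmT)
      inter_closure_band_subset hx hy).elim

section UniformEquiv

variable {S S' : Set ℕ} (f : YSet n S ≃ YSet n S')

theorem exists_band_of_adjacent_cells (hn : 0 < n) (hf : UniformContinuous f)
    (hf' : Continuous f.symm) (hs : s ∈ S) (hs1 : 1 ≤ s) {g g' : Fin n → Fin (s + 1)}
    (hadj : ∀ i, (g' i : ℕ) = g i ∨ (g' i : ℕ) = g i + 1) (hne : g ≠ g') {x y : YSet n S}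
    (hx : x.1 ∈ cell s g) (hy : y.1 ∈ cell s g') :
    ∃ m ∈ S', 1 ≤ m ∧ (f x).1 ∈ band m ∧ (f y).1 ∈ band m := by
  refine exists_band_of_not_areSeparated hn (fun h => hne ?_) fun h => not_areSeparated_cell hadj ?_
  · have := hf'.connectedComponent_eq h
    simp only [Equiv.symm_apply_apply] at this
    exact eq_of_connectedComponent_eq hs hs1 this hx hy
  · have hsep : AreSeparated (connectedComponent x) (connectedComponent y) :=
      (h.mono (hf.continuous.image_connectedComponent_subset x)
        (hf.continuous.image_connectedComponent_subset y)).of_image hf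
    rw [connectedComponent_eq_cell hs hs1 hx, connectedComponent_eq_cell hs hs1 hy] at hsep
    simpa only [Subtype.image_preimage_coe, inter_eq_right.2 (cell_subset_YSet hs1 _)] using
      hsep.image_of_isometry isometry_subtype_coe

theorem exists_mapsTo_band (hn : 0 < n) (hf : UniformContinuous f) (hf' : Continuous f.symm)
    (hs : s ∈ S) (hs1 : 1 ≤ s) :
    ∃ m ∈ S', 1 ≤ m ∧ ∀ x : YSet n S, x.1 ∈ band s → (f x).1 ∈ band m := by
  choose pt hpt using exists_subtype_mem_cell (T := S) (n := n) hs1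
  let one : Fin n → Fin (s + 1) := fun _ => ⟨1, by omega⟩
  have hone : 0 ≠ one := fun h => by simpa [one] using congrArg Fin.val (congrFun h ⟨0, hn⟩)
  obtain ⟨m, hmS', hm1, hm0, -⟩ :=
    exists_band_of_adjacent_cells f hn hf hf' hs hs1 (fun _ => Or.inr rfl) hone (hpt 0) (hpt one)
  have hbase : ∀ x : YSet n S, x.1 ∈ cell s 0 → (f x).1 ∈ band m := fun x hx =>
    mem_band_of_connectedComponent_eq (hf.continuous.connectedComponent_eq
      ((connectedComponent_eq_cell hs hs1 (hpt 0)).trans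
        (connectedComponent_eq_cell hs hs1 hx).symm)) hm0
  have hcells : ∀ g, ∀ x : YSet n S, x.1 ∈ cell s g → (f x).1 ∈ band m := by
    refine grid_induction hbase fun g g' hadj hg y hy => ?_
    rcases eq_or_ne g g' with rfl | hne
    · exact hg y hy
    obtain ⟨m', -, -, hm', hym'⟩ :=
      exists_band_of_adjacent_cells f hn hf hf' hs hs1 hadj hne (hpt g) hy
    rw [eq_of_mem_band hn (hg _ (hpt g)) hm']
    exact hym'
  refine ⟨m, hmS', hm1, fun x hx => ?_⟩
  obtain ⟨g, hg⟩ := exists_mem_cell x.2 hx hs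
  exact hcells g x hg

theorem le_of_mapsTo_band (hn : 0 < n) (hf' : Continuous f.symm) (hs : s ∈ S) (hs1 : 1 ≤ s)
    (hm : m ∈ S') (hm1 : 1 ≤ m)
    (hfm : ∀ x : YSet n S, x.1 ∈ band s → (f x).1 ∈ band m) : s ≤ m := by
  choose pt hpt using exists_subtype_mem_cell (T := S) (n := n) hs1
  choose γ hγ using fun g => exists_mem_cell (f (pt g)).2 (hfm _ (cell_subset_band g (hpt g))) hm
  have hinj : Function.Injective γ := fun g g' h => by
    have hc : connectedComponent (f (pt g)) = connectedComponent (f (pt g')) := by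
      rw [connectedComponent_eq_cell hm hm1 (hγ g), connectedComponent_eq_cell hm hm1 (hγ g'), h]
    have := hf'.connectedComponent_eq hc
    simp only [Equiv.symm_apply_apply] at this
    exact eq_of_connectedComponent_eq hs hs1 this (hpt g) (hpt g')
  have hcard := Fintype.card_le_of_injective γ hinj
  simp only [Fintype.card_fun, Fintype.card_fin] at hcard
  exact Nat.le_of_add_le_add_right ((Nat.pow_le_pow_iff_left hn.ne').1 hcard)

theorem subset_of_uniformContinuous (hn : 0 < n) (hS : 0 ∉ S) (hf : UniformContinuous f)
    (hf' : UniformContinuous f.symm) : S ⊆ S' := by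
  intro s hs
  have hs1 : 1 ≤ s := Nat.one_le_iff_ne_zero.2 fun h => hS (h ▸ hs)
  obtain ⟨m, hm, hm1, hfm⟩ := exists_mapsTo_band f hn hf hf'.continuous hs hs1
  obtain ⟨t, -, -, hft⟩ := exists_mapsTo_band f.symm hn hf' hf.continuous hm hm1
  obtain ⟨x, hx⟩ := exists_subtype_mem_cell (T := S) hs1 (0 : Fin n → Fin (s + 1))
  have hxs := cell_subset_band _ hx
  have hxt : x.1 ∈ band t := by simpa using hft (f x) (hfm x hxs)
  obtain rfl : t = s := eq_of_mem_band hn hxt hxs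
  have hsm := le_of_mapsTo_band f hn hf'.continuous hs hs1 hm hm1 hfm
  have hms := le_of_mapsTo_band f.symm hn hf.continuous hm hm1 hs hs1 hft
  rwa [le_antisymm hsm hms]

end UniformEquiv

end YSet

/-- For `n ≥ 1` and distinct `S, S' ⊆ ℕ = {1,2,3,…}` there is no
bijection between `Y_S` and `Y_{S'}` that is uniformly continuous in both directions. -/
theorem stmt_7 (n : ℕ) (hn : 1 ≤ n) (S S' : Set ℕ) (hS : 0 ∉ S) (hS' : 0 ∉ S')
    (hne : S ≠ S') :
    ¬ ∃ f : ↥(YSet n S) ≃ ↥(YSet n S'),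
        UniformContinuous ⇑f ∧ UniformContinuous ⇑f.symm := by
  rintro ⟨f, hf, hf'⟩
  exact hne ((YSet.subset_of_uniformContinuous f hn hS hf hf').antisymm
    (YSet.subset_of_uniformContinuous f.symm hn hS' hf' hf))
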